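/- (Approximation guarantee of the RLA algorithm.) Let f be a nonnegative k-submodular function with f(0) = 0 and V ≠ ∅. Let o be a k-set with c(o) ≤ B maximizing f among all k-sets of cost at most B, and write opt = f(o). Let ε be a real with 0 < ε < 1/5 and let v be a real with opt/(1+ε) ≤ v ≤ opt. Let s = s^n be the output of an RLA run with threshold τ = 2v/(5B), and let (e_m, i_m) ∈ V × {1,…,k} maximize f((e,i)) over all e ∈ V and i ∈ {1,…,k}. Then max{f(s), f((e_m,i_m))} ≥ (1/5 − ε)·opt. -/

import Mathlib

/-- The meet `x ⊓ y` of two `k`-sets, with components `Xᵢ ∩ Yᵢ`. -/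
def sqcap {V : Type*} (x y : V → ℕ) : V → ℕ :=
  fun e => if x e = y e then x e else 0

/-- The join `x ⊔ y` of two `k`-sets, with components
`Zᵢ = (Xᵢ ∪ Yᵢ) \ ⋃_{j ≠ i} (Xⱼ ∪ Yⱼ)`. -/
def sqcup {V : Type*} (x y : V → ℕ) : V → ℕ :=
  fun e =>
    if x e = 0 then y e
    else if y e = 0 then x e
    else if x e = y e then x e else 0

/-- A `k`-set: every element gets a position in `{0, 1, …, k}`
(`0` meaning unselected). -/
def IsKSet {V : Type*} (k : ℕ) (x : V → ℕ) : Prop := ∀ e, x e ≤ k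

/-- `x ⊑ y`: every component of `x` is contained in the corresponding
component of `y`. -/
def KLE {V : Type*} (x y : V → ℕ) : Prop := ∀ e, x e ≠ 0 → y e = x e

/-- The singleton `k`-set `(e, i)`. -/
def singl {V : Type*} [DecidableEq V] (e : V) (i : ℕ) : V → ℕ :=
  fun e' => if e' = e then i else 0

/-- `k`-submodularity: `f x + f y ≥ f (x ⊓ y) + f (x ⊔ y)` for all `k`-sets. -/
def KSubmodular {V : Type*} (k : ℕ) (f : (V → ℕ) → ℝ) : Prop :=
  ∀ x y : V → ℕ, IsKSet k x → IsKSet k y →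
    f x + f y ≥ f (sqcap x y) + f (sqcup x y)

/-- The marginal gain `Δ_{(e,i)} f(x) = f (x ⊔ (e,i)) - f x`. -/
def marg {V : Type*} [DecidableEq V] (f : (V → ℕ) → ℝ) (e : V) (i : ℕ)
    (x : V → ℕ) : ℝ :=
  f (sqcup x (singl e i)) - f x

/-- The cost of a `k`-set: the total cost of its support. -/
noncomputable def cost {V : Type*} [Fintype V] (c : V → ℝ) (x : V → ℕ) : ℝ :=
  ∑ e ∈ Finset.univ.filter (fun e => x e ≠ 0), c e


/-!
Following the paper, walk from `o` to the output `s` through `hybrid o s e j`, which agrees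
with `s` on `e 0, …, e (j - 1)` and with `o` elsewhere. Pairwise monotonicity and orthant
submodularity show that an accepted step lowers `f` along this walk by at most twice its gain,
and a rejected step by at most the gain `g j` that `e j` would have had at its position in `o`;
telescoping gives `f o ≤ 3 f s + ∑ g j` over the rejected elements of `supp o`. A threshold
rejection has `g j < τ c(e j)`; a budget rejection has `g j ≤ f (e_m, i_m)` and
`f s ≥ τ c(s) > τ (B - c(e j))`. As `c(o) ≤ B`, either all these rejections are threshold ones
(`∑ g j ≤ τ B = 2v/5`), or a budget one has `c(e j) ≤ B/2` (`f s ≥ v/5`), or exactly one is a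
budget one (`∑ g j ≤ f s + f (e_m, i_m)`).
-/

open Finset Function

section KSet

variable {V : Type*} [DecidableEq V]

theorem IsKSet.update {k : ℕ} {x : V → ℕ} (hx : IsKSet k x) (e : V) {i : ℕ} (hi : i ≤ k) :
    IsKSet k (update x e i) := by
  intro a
  rcases eq_or_ne a e with rfl | h
  · simpa using hi
  · simpa [h] using hx a

theorem KLE.update_zero {x y : V → ℕ} (hxy : KLE x y) {e : V} (hxe : x e = 0) :
    KLE x (update y e 0) := by
  intro a ha
  have hae : a ≠ e := by rintro rfl; exact ha hxe
  simpa [hae] using hxy a ha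

theorem sqcup_singl_of_eq_zero {x : V → ℕ} {e : V} (i : ℕ) (hx : x e = 0) :
    sqcup x (singl e i) = update x e i := by
  funext a
  rcases eq_or_ne a e with rfl | h
  · simp [sqcup, singl, hx]
  · by_cases hxa : x a = 0 <;> simp [sqcup, singl, h, hxa]

theorem marg_of_eq_zero (f : (V → ℕ) → ℝ) {x : V → ℕ} {e : V} (i : ℕ) (hx : x e = 0) :
    marg f e i x = f (update x e i) - f x := by
  rw [marg, sqcup_singl_of_eq_zero i hx]

theorem marg_zero (f : (V → ℕ) → ℝ) (e : V) (x : V → ℕ) : marg f e 0 x = 0 := by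
  have hx : sqcup x (singl e 0) = x := by
    funext a
    by_cases hxa : x a = 0 <;> simp [sqcup, singl, hxa]
  rw [marg, hx, sub_self]

theorem marg_zero_eq_apply_singl {f : (V → ℕ) → ℝ} (hf0 : f (fun _ => 0) = 0) (e : V) (i : ℕ) :
    marg f e i (fun _ => 0) = f (singl e i) := by
  rw [marg_of_eq_zero f i rfl, hf0, sub_zero]
  congr 1
  funext a
  simp [singl, update_apply]

theorem exists_ne_zero_ne_of_two_le {k : ℕ} (hk : 2 ≤ k) (p : ℕ) : ∃ l, l ≠ 0 ∧ l ≤ k ∧ l ≠ p :=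
  if hp : p = 1 then ⟨2, by omega, hk, by omega⟩ else ⟨1, one_ne_zero, by omega, Ne.symm hp⟩

namespace KSubmodular

variable {k : ℕ} {f : (V → ℕ) → ℝ}

/-- Pairwise monotonicity. -/
theorem marg_add_marg_nonneg (hf : KSubmodular k f) {x : V → ℕ} (hx : IsKSet k x) {e : V}
    (hxe : x e = 0) {i j : ℕ} (hi : i ≠ 0) (hik : i ≤ k) (hj : j ≠ 0) (hjk : j ≤ k)
    (hij : i ≠ j) : 0 ≤ marg f e i x + marg f e j x := by
  have h := hf _ _ (hx.update e hik) (hx.update e hjk)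
  have hcap : sqcap (update x e i) (update x e j) = x := by
    funext a
    rcases eq_or_ne a e with rfl | ha <;> simp [sqcap, *]
  have hcup : sqcup (update x e i) (update x e j) = x := by
    funext a
    rcases eq_or_ne a e with rfl | ha
    · simp [sqcup, *]
    · by_cases hxa : x a = 0 <;> simp [sqcup, *]
  rw [hcap, hcup] at h
  rw [marg_of_eq_zero f i hxe, marg_of_eq_zero f j hxe]
  linarith

/-- Orthant submodularity. -/
theorem marg_le_marg_of_kle (hf : KSubmodular k f) {x y : V → ℕ} (hx : IsKSet k x)
    (hy : IsKSet k y) (hxy : KLE x y) {e : V} (hye : y e = 0) {i : ℕ} (hi : i ≠ 0)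
    (hik : i ≤ k) : marg f e i y ≤ marg f e i x := by
  have hxe : x e = 0 := by
    by_contra h
    exact h (by rw [← hxy e h, hye])
  have h := hf _ _ (hx.update e hik) hy
  have hcap : sqcap (update x e i) y = x := by
    funext a
    rcases eq_or_ne a e with rfl | ha
    · simp [sqcap, *]
    · by_cases hxa : x a = 0
      · by_cases hya : y a = 0 <;> simp [sqcap, ha, hxa, hya, eq_comm]
      · simp [sqcap, ha, hxy a hxa]
  have hcup : sqcup (update x e i) y = update y e i := by
    funext a
    rcases eq_or_ne a e with rfl | ha
    · simp [sqcup, *]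
    · by_cases hxa : x a = 0
      · simp [sqcup, ha, hxa]
      · simp [sqcup, ha, hxa, hxy a hxa]
  rw [hcap, hcup] at h
  rw [marg_of_eq_zero f i hxe, marg_of_eq_zero f i hye]
  linarith

theorem marg_nonneg_of_forall_le (hk : 2 ≤ k) (hf : KSubmodular k f) {x : V → ℕ}
    (hx : IsKSet k x) {e : V} (hxe : x e = 0) {p : ℕ} (hp : p ≠ 0) (hpk : p ≤ k)
    (hbest : ∀ l, 1 ≤ l → l ≤ k → marg f e l x ≤ marg f e p x) : 0 ≤ marg f e p x := by
  obtain ⟨l, hl, hlk, hlp⟩ := exists_ne_zero_ne_of_two_le hk p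
  have := hf.marg_add_marg_nonneg hx hxe hp hpk hl hlk (Ne.symm hlp)
  linarith [hbest l (Nat.one_le_iff_ne_zero.mpr hl) hlk]

/-- With `m = y[e ↦ 0]`, pairwise monotonicity at `m` and orthant submodularity
between `x` and `m` compare both `y` and `y[e ↦ p]` to `m`. -/
theorem sub_update_le_two_mul_marg (hk : 2 ≤ k) (hf : KSubmodular k f) {x y : V → ℕ}
    (hx : IsKSet k x) (hy : IsKSet k y) (hxy : KLE x y) {e : V} (hxe : x e = 0) {p : ℕ}
    (hp : p ≠ 0) (hpk : p ≤ k) (hbest : ∀ l, 1 ≤ l → l ≤ k → marg f e l x ≤ marg f e p x) :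
    f y - f (update y e p) ≤ 2 * marg f e p x := by
  have hgain := hf.marg_nonneg_of_forall_le hk hx hxe hp hpk hbest
  set m := update y e 0
  have hm : IsKSet k m := hy.update e (Nat.zero_le k)
  have hxm : KLE x m := hxy.update_zero hxe
  have hme : m e = 0 := update_self ..
  have hmp : f (update y e p) - f m = marg f e p m := by
    rw [marg_of_eq_zero f p hme, update_idem]
  by_cases hq : y e = 0
  · obtain ⟨l, hl, hlk, hlp⟩ := exists_ne_zero_ne_of_two_le hk p
    have hym : f y = f m := by rw [show m = y from update_eq_self_iff.mpr hq.symm]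
    have h₁ := hf.marg_add_marg_nonneg hm hme hp hpk hl hlk (Ne.symm hlp)
    have h₂ := hf.marg_le_marg_of_kle hx hm hxm hme hl hlk
    have h₃ := hbest l (Nat.one_le_iff_ne_zero.mpr hl) hlk
    linarith
  by_cases hqp : y e = p
  · have hyp : update y e p = y := by rw [← hqp, update_eq_self]
    rw [hyp]
    linarith
  · have hyq : f y - f m = marg f e (y e) m := by
      rw [marg_of_eq_zero f _ hme, update_idem, update_eq_self]
    have h₁ := hf.marg_add_marg_nonneg hm hme hp hpk hq (hy e) (Ne.symm hqp)
    have h₂ := hf.marg_le_marg_of_kle hx hm hxm hme hq (hy e)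
    have h₃ := hbest (y e) (Nat.one_le_iff_ne_zero.mpr hq) (hy e)
    linarith

theorem sub_update_zero_le_marg (hf : KSubmodular k f) {x y : V → ℕ} (hx : IsKSet k x)
    (hy : IsKSet k y) (hxy : KLE x y) {e : V} (hxe : x e = 0) :
    f y - f (update y e 0) ≤ marg f e (y e) x := by
  by_cases hq : y e = 0
  · rw [hq, marg_zero, ← hq, update_eq_self, sub_self]
  · have hm := hf.marg_le_marg_of_kle hx (hy.update e (Nat.zero_le k)) (hxy.update_zero hxe)
      (update_self ..) hq (hy e)
    rwa [marg_of_eq_zero f _ (update_self ..), update_idem, update_eq_self] at hm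

theorem marg_le_apply_singl (hf : KSubmodular k f) (hf0 : f (fun _ => 0) = 0) {x : V → ℕ}
    (hx : IsKSet k x) {e : V} (hxe : x e = 0) {i : ℕ} (hi : i ≠ 0) (hik : i ≤ k) :
    marg f e i x ≤ f (singl e i) :=
  marg_zero_eq_apply_singl hf0 e i ▸
    hf.marg_le_marg_of_kle (fun _ => Nat.zero_le k) hx (fun _ h => absurd rfl h) hxe hi hik

end KSubmodular

end KSet

section Cost

variable {V : Type*} [Fintype V]

theorem cost_update_of_eq_zero [DecidableEq V] (c : V → ℝ) {x : V → ℕ} {e : V} (hx : x e = 0)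
    {i : ℕ} (hi : i ≠ 0) : cost c (update x e i) = cost c x + c e := by
  have hsupp : univ.filter (fun a => update x e i a ≠ 0) = insert e (univ.filter (x · ≠ 0)) := by
    ext a
    rcases eq_or_ne a e with rfl | ha <;> simp [*]
  rw [cost, hsupp, sum_insert (by simp [hx]), add_comm]
  rfl

theorem cost_le_cost_of_kle {c : V → ℝ} (hc : ∀ a, 0 ≤ c a) {x y : V → ℕ} (hxy : KLE x y) :
    cost c x ≤ cost c y := by
  refine sum_le_sum_of_subset_of_nonneg (fun a ha => ?_) (fun a _ _ => hc a)
  simp only [mem_filter, mem_univ, true_and] at ha ⊢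
  rwa [hxy a ha]

end Cost

/-- Knapsack counting: every item is either cheap (`g j ≤ τ w j`) or heavy
(`τ (B - w j) ≤ F`). A heavy item of weight at most `B / 2` gives `τ B ≤ 2 F`; otherwise
at most one item `j₀` is heavy, since the others weigh at most `B - w j₀ < B / 2`. -/
theorem Finset.sum_le_of_cheap_or_heavy {ι : Type*} [DecidableEq ι] (S : Finset ι)
    {g w : ι → ℝ} {B τ F M : ℝ} (hw : ∀ j ∈ S, 0 ≤ w j) (hwB : ∑ j ∈ S, w j ≤ B)
    (hτ : 0 ≤ τ) (hM : ∀ j ∈ S, g j ≤ M) (hg : ∀ j ∈ S, g j ≤ τ * w j ∨ τ * (B - w j) ≤ F) :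
    ∑ j ∈ S, g j ≤ τ * B ∨ τ * B ≤ 2 * F ∨ ∑ j ∈ S, g j ≤ F + M := by
  by_cases hlight : ∃ j ∈ S, ¬ g j ≤ τ * w j ∧ w j ≤ B / 2
  · obtain ⟨j, hj, hheavy, hjB⟩ := hlight
    have hF := (hg j hj).resolve_left hheavy
    have hhalf : τ * (B / 2) ≤ τ * (B - w j) := mul_le_mul_of_nonneg_left (by linarith) hτ
    right; left
    linarith
  push Not at hlight
  by_cases hheavy : ∃ j ∈ S, ¬ g j ≤ τ * w j
  · obtain ⟨j₀, hj₀, hheavy₀⟩ := hheavy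
    have hF := (hg j₀ hj₀).resolve_left hheavy₀
    have hsplit := sum_erase_add S w hj₀
    have hcheap : ∀ j ∈ S.erase j₀, g j ≤ τ * w j := by
      intro j hj
      by_contra hgj
      have hjw := single_le_sum (fun i hi => hw i (mem_of_mem_erase hi)) hj
      have hj₀w := hlight j₀ hj₀ (lt_of_not_ge hheavy₀)
      linarith [hlight j (mem_of_mem_erase hj) (lt_of_not_ge hgj)]
    have hrest : ∑ j ∈ S.erase j₀, g j ≤ τ * (B - w j₀) :=
      calc ∑ j ∈ S.erase j₀, g j ≤ ∑ j ∈ S.erase j₀, τ * w j := sum_le_sum hcheap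
        _ = τ * ∑ j ∈ S.erase j₀, w j := (mul_sum ..).symm
        _ ≤ τ * (B - w j₀) := mul_le_mul_of_nonneg_left (by linarith) hτ
    right; right
    linarith [sum_erase_add S g hj₀, hM j₀ hj₀]
  · push Not at hheavy
    left
    calc ∑ j ∈ S, g j ≤ ∑ j ∈ S, τ * w j := sum_le_sum hheavy
      _ = τ * ∑ j ∈ S, w j := (mul_sum ..).symm
      _ ≤ τ * B := mul_le_mul_of_nonneg_left hwB hτ

section Hybrid

variable {V : Type*} [DecidableEq V]

/-- Interpolates from `o` (at `0`) to `y` (at `n`, when `e` enumerates `V` in `n` steps). -/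
def hybrid (o y : V → ℕ) (e : ℕ → V) : ℕ → V → ℕ
  | 0 => o
  | j + 1 => update (hybrid o y e j) (e j) (y (e j))

variable {o y : V → ℕ} {e : ℕ → V}

theorem hybrid_apply_of_forall_ne {j : ℕ} {a : V} (ha : ∀ t < j, e t ≠ a) :
    hybrid o y e j a = o a := by
  induction j with
  | zero => rfl
  | succ j ih =>
    rw [hybrid, update_of_ne (ha j j.lt_succ_self).symm]
    exact ih fun t ht => ha t (ht.trans j.lt_succ_self)

theorem hybrid_apply_of_lt {t j : ℕ} (ht : t < j) : hybrid o y e j (e t) = y (e t) := by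
  induction j with
  | zero => exact absurd ht (Nat.not_lt_zero t)
  | succ j ih =>
    rw [hybrid]
    by_cases hte : e t = e j
    · rw [hte, update_self]
    · have htj : t ≠ j := by rintro rfl; exact hte rfl
      rw [update_of_ne hte]
      exact ih (by omega)

theorem IsKSet.hybrid {k : ℕ} (ho : IsKSet k o) (hy : IsKSet k y) (j : ℕ) :
    IsKSet k (hybrid o y e j) := by
  induction j with
  | zero => exact ho
  | succ j ih => exact ih.update _ (hy _)

end Hybrid

section RLA

variable {V : Type*} [Fintype V] [DecidableEq V]

def RLAAccepts (f : (V → ℕ) → ℝ) (c : V → ℝ) (B τ : ℝ) (e : ℕ → V) (s : ℕ → V → ℕ)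
    (pos : ℕ → ℕ) (j : ℕ) : Prop :=
  cost c (s j) + c (e j) ≤ B ∧ c (e j) * τ ≤ marg f (e j) (pos j) (s j)

/-- A run of RLA on the enumeration `e 0, …, e (n - 1)` of `V`, indexed from `0`: `e j` is
processed at state `s j`, giving `s (j + 1)`. -/
structure IsRLARun (k : ℕ) (f : (V → ℕ) → ℝ) (c : V → ℝ) (B τ : ℝ) (n : ℕ) (e : ℕ → V)
    (s : ℕ → V → ℕ) (pos : ℕ → ℕ) : Prop where
  injOn : Set.InjOn e (Set.Iio n)
  surj : ∀ a, ∃ j < n, e j = a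
  init : s 0 = fun _ => 0
  pos_mem : ∀ j < n, 1 ≤ pos j ∧ pos j ≤ k
  pos_best : ∀ j < n, ∀ l, 1 ≤ l → l ≤ k → marg f (e j) l (s j) ≤ marg f (e j) (pos j) (s j)
  accept : ∀ j < n, RLAAccepts f c B τ e s pos j → s (j + 1) = sqcup (s j) (singl (e j) (pos j))
  reject : ∀ j < n, ¬ RLAAccepts f c B τ e s pos j → s (j + 1) = s j

open scoped Classical in
noncomputable def rejectedSteps (f : (V → ℕ) → ℝ) (c : V → ℝ) (B τ : ℝ) (n : ℕ) (e : ℕ → V)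
    (s : ℕ → V → ℕ) (pos : ℕ → ℕ) (o : V → ℕ) : Finset ℕ :=
  (range n).filter fun j => ¬ RLAAccepts f c B τ e s pos j ∧ o (e j) ≠ 0

theorem mem_rejectedSteps {f : (V → ℕ) → ℝ} {c : V → ℝ} {B τ : ℝ} {n : ℕ} {e : ℕ → V}
    {s : ℕ → V → ℕ} {pos : ℕ → ℕ} {o : V → ℕ} {j : ℕ} :
    j ∈ rejectedSteps f c B τ n e s pos o ↔
      j < n ∧ ¬ RLAAccepts f c B τ e s pos j ∧ o (e j) ≠ 0 := by
  simp [rejectedSteps]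

namespace IsRLARun

variable {k : ℕ} {f : (V → ℕ) → ℝ} {c : V → ℝ} {B τ : ℝ} {n : ℕ} {e : ℕ → V}
  {s : ℕ → V → ℕ} {pos : ℕ → ℕ} {j : ℕ}

theorem pos_ne_zero (h : IsRLARun k f c B τ n e s pos) (hj : j < n) : pos j ≠ 0 :=
  Nat.one_le_iff_ne_zero.mp (h.pos_mem j hj).1

theorem succ_apply_of_ne (h : IsRLARun k f c B τ n e s pos) (hj : j < n) {a : V}
    (ha : a ≠ e j) : s (j + 1) a = s j a := by
  by_cases hacc : RLAAccepts f c B τ e s pos j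
  · rw [h.accept j hj hacc]
    by_cases hsa : s j a = 0 <;> simp [sqcup, singl, ha, hsa]
  · rw [h.reject j hj hacc]

theorem apply_eq_of_forall_ne (h : IsRLARun k f c B τ n e s pos) {j' : ℕ} {a : V}
    (hjj' : j ≤ j') (hj' : j' ≤ n) (ha : ∀ t, j ≤ t → t < j' → e t ≠ a) : s j' a = s j a := by
  induction j', hjj' using Nat.le_induction with
  | base => rfl
  | succ t hjt ih =>
    rw [h.succ_apply_of_ne hj' (ha t hjt t.lt_succ_self).symm]
    exact ih (by omega) fun t' ht' ht't => ha t' ht' (by omega)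

theorem apply_eq_zero (h : IsRLARun k f c B τ n e s pos) (hj : j ≤ n) {a : V}
    (ha : ∀ t < j, e t ≠ a) : s j a = 0 := by
  rw [h.apply_eq_of_forall_ne (Nat.zero_le j) hj fun t _ ht => ha t ht, h.init]

theorem apply_self_eq_zero (h : IsRLARun k f c B τ n e s pos) (hj : j < n) : s j (e j) = 0 :=
  h.apply_eq_zero hj.le fun _ ht hte => (h.injOn (ht.trans hj) hj hte).not_lt ht

theorem exists_lt_of_apply_ne_zero (h : IsRLARun k f c B τ n e s pos) (hj : j ≤ n) {a : V}
    (ha : s j a ≠ 0) : ∃ t < j, e t = a := by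
  by_contra! hne
  exact ha (h.apply_eq_zero hj hne)

theorem succ_eq_update (h : IsRLARun k f c B τ n e s pos) (hj : j < n)
    (hacc : RLAAccepts f c B τ e s pos j) : s (j + 1) = update (s j) (e j) (pos j) := by
  rw [h.accept j hj hacc, sqcup_singl_of_eq_zero _ (h.apply_self_eq_zero hj)]

theorem kle (h : IsRLARun k f c B τ n e s pos) {j' : ℕ} (hjj' : j ≤ j') (hj' : j' ≤ n) :
    KLE (s j) (s j') := by
  intro a ha
  obtain ⟨t, htj, rfl⟩ := h.exists_lt_of_apply_ne_zero (hjj'.trans hj') ha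
  exact h.apply_eq_of_forall_ne hjj' hj' fun t' ht' ht'j' hte =>
    (h.injOn (Set.mem_Iio.mpr (by omega)) (Set.mem_Iio.mpr (by omega)) hte).not_gt (by omega)

theorem last_apply_self (h : IsRLARun k f c B τ n e s pos) (hj : j < n) :
    s n (e j) = s (j + 1) (e j) :=
  h.apply_eq_of_forall_ne hj le_rfl fun t ht htn hte =>
    (h.injOn htn hj hte).not_gt (by omega)

theorem isKSet (h : IsRLARun k f c B τ n e s pos) (hj : j ≤ n) : IsKSet k (s j) := by
  induction j with
  | zero => rw [h.init]; exact fun _ => Nat.zero_le k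
  | succ j ih =>
    by_cases hacc : RLAAccepts f c B τ e s pos j
    · rw [h.succ_eq_update hj hacc]
      exact (ih (by omega)).update _ (h.pos_mem j hj).2
    · rw [h.reject j hj hacc]
      exact ih (by omega)

theorem mul_cost_le (h : IsRLARun k f c B τ n e s pos) (hf0 : f (fun _ => 0) = 0)
    (hj : j ≤ n) : τ * cost c (s j) ≤ f (s j) := by
  induction j with
  | zero => simp [h.init, cost, hf0]
  | succ j ih =>
    have ih := ih (by omega)
    by_cases hacc : RLAAccepts f c B τ e s pos j
    · have hgain := hacc.2
      rw [marg_of_eq_zero f _ (h.apply_self_eq_zero hj), ← h.succ_eq_update hj hacc] at hgain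
      rw [h.succ_eq_update hj hacc,
        cost_update_of_eq_zero c (h.apply_self_eq_zero hj) (h.pos_ne_zero hj),
        ← h.succ_eq_update hj hacc]
      linarith
    · rwa [h.reject j hj hacc]

theorem hybrid_last (h : IsRLARun k f c B τ n e s pos) (o : V → ℕ) : hybrid o (s n) e n = s n := by
  funext a
  obtain ⟨t, htn, rfl⟩ := h.surj a
  exact hybrid_apply_of_lt htn

theorem hybrid_apply_self (h : IsRLARun k f c B τ n e s pos) (o : V → ℕ) (hj : j < n) :
    hybrid o (s n) e j (e j) = o (e j) :=
  hybrid_apply_of_forall_ne fun _ ht hte => (h.injOn (ht.trans hj) hj hte).not_lt ht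

theorem kle_hybrid (h : IsRLARun k f c B τ n e s pos) (o : V → ℕ) (hj : j ≤ n) :
    KLE (s j) (hybrid o (s n) e j) := by
  intro a ha
  obtain ⟨t, htj, rfl⟩ := h.exists_lt_of_apply_ne_zero hj ha
  rw [hybrid_apply_of_lt htj, h.kle hj le_rfl _ ha]

open scoped Classical in
theorem sub_hybrid_succ_le (h : IsRLARun k f c B τ n e s pos) (hk : 2 ≤ k)
    (hf : KSubmodular k f) {o : V → ℕ} (ho : IsKSet k o) (hj : j < n) :
    f (hybrid o (s n) e j) - f (hybrid o (s n) e (j + 1)) ≤ 2 * (f (s (j + 1)) - f (s j)) +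
      if ¬ RLAAccepts f c B τ e s pos j ∧ o (e j) ≠ 0 then marg f (e j) (o (e j)) (s j) else 0 := by
  have hsj := h.isKSet hj.le
  have hO := ho.hybrid (e := e) (h.isKSet le_rfl) j
  have hsO := h.kle_hybrid o hj.le
  have hfree := h.apply_self_eq_zero hj
  rw [hybrid, h.last_apply_self hj]
  by_cases hacc : RLAAccepts f c B τ e s pos j
  · have hstep := h.succ_eq_update hj hacc
    rw [if_neg (fun hrej => hrej.1 hacc), hstep, update_self, ← marg_of_eq_zero f _ hfree]
    have := hf.sub_update_le_two_mul_marg hk hsj hO hsO hfree (h.pos_ne_zero hj)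
      (h.pos_mem j hj).2 (h.pos_best j hj)
    linarith
  · rw [h.reject j hj hacc, hfree, sub_self, mul_zero, zero_add]
    have := hf.sub_update_zero_le_marg hsj hO hsO hfree
    rw [h.hybrid_apply_self o hj] at this
    split_ifs with hq
    · exact this
    · rwa [not_and_not_right.mp hq hacc, marg_zero] at this

theorem le_three_mul_add_sum (h : IsRLARun k f c B τ n e s pos) (hk : 2 ≤ k)
    (hf : KSubmodular k f) (hf0 : f (fun _ => 0) = 0) {o : V → ℕ} (ho : IsKSet k o) :
    f o ≤ 3 * f (s n) + ∑ j ∈ rejectedSteps f c B τ n e s pos o, marg f (e j) (o (e j)) (s j) := by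
  have htel := sum_le_sum fun j (hj : j ∈ range n) =>
    h.sub_hybrid_succ_le hk hf ho (mem_range.mp hj)
  rw [sum_range_sub' (fun j => f (hybrid o (s n) e j)), sum_add_distrib, ← mul_sum,
    sum_range_sub (fun j => f (s j)), ← sum_filter, h.hybrid_last, h.init, hf0] at htel
  change f o - f (s n) ≤ 2 * (f (s n) - 0) +
    ∑ j ∈ rejectedSteps f c B τ n e s pos o, marg f (e j) (o (e j)) (s j) at htel
  linarith

theorem marg_le_or_of_not_accepts (h : IsRLARun k f c B τ n e s pos)
    (hf0 : f (fun _ => 0) = 0) (hc : ∀ a, 0 ≤ c a) (hτ : 0 ≤ τ) (hj : j < n)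
    (hacc : ¬ RLAAccepts f c B τ e s pos j) {q : ℕ} (hq : 1 ≤ q) (hqk : q ≤ k) :
    marg f (e j) q (s j) ≤ τ * c (e j) ∨ τ * (B - c (e j)) ≤ f (s n) := by
  by_cases hbudget : cost c (s j) + c (e j) ≤ B
  · left
    have hgain : marg f (e j) (pos j) (s j) < c (e j) * τ :=
      lt_of_not_ge fun hτj => hacc ⟨hbudget, hτj⟩
    linarith [h.pos_best j hj q hq hqk]
  · right
    calc τ * (B - c (e j)) ≤ τ * cost c (s n) :=
          mul_le_mul_of_nonneg_left (by linarith [cost_le_cost_of_kle hc (h.kle hj.le le_rfl)]) hτ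
      _ ≤ f (s n) := h.mul_cost_le hf0 le_rfl

theorem sum_marg_rejectedSteps_le (h : IsRLARun k f c B τ n e s pos) (hf : KSubmodular k f)
    (hf0 : f (fun _ => 0) = 0) (hc : ∀ a, 0 ≤ c a) (hτ : 0 ≤ τ) {o : V → ℕ} (ho : IsKSet k o)
    (hoB : cost c o ≤ B) {M : ℝ} (hM : ∀ a i, 1 ≤ i → i ≤ k → f (singl a i) ≤ M) :
    ∑ j ∈ rejectedSteps f c B τ n e s pos o, marg f (e j) (o (e j)) (s j) ≤ τ * B ∨
      τ * B ≤ 2 * f (s n) ∨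
      ∑ j ∈ rejectedSteps f c B τ n e s pos o, marg f (e j) (o (e j)) (s j) ≤ f (s n) + M := by
  have hcost : ∑ j ∈ rejectedSteps f c B τ n e s pos o, c (e j) ≤ cost c o := by
    rw [← sum_image fun a ha b hb =>
      h.injOn (mem_rejectedSteps.mp ha).1 (mem_rejectedSteps.mp hb).1]
    refine sum_le_sum_of_subset_of_nonneg (fun a ha => ?_) (fun a _ _ => hc a)
    obtain ⟨j, hj, rfl⟩ := mem_image.mp ha
    simpa using (mem_rejectedSteps.mp hj).2.2
  refine sum_le_of_cheap_or_heavy _ (fun j _ => hc (e j)) (hcost.trans hoB) hτ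
    (fun j hj => ?_) (fun j hj => ?_) <;>
  obtain ⟨hjn, hrej, hoj⟩ := mem_rejectedSteps.mp hj
  · exact (hf.marg_le_apply_singl hf0 (h.isKSet hjn.le) (h.apply_self_eq_zero hjn) hoj
      (ho _)).trans (hM _ _ (Nat.one_le_iff_ne_zero.mpr hoj) (ho _))
  · exact h.marg_le_or_of_not_accepts hf0 hc hτ hjn hrej (Nat.one_le_iff_ne_zero.mpr hoj) (ho _)

end IsRLARun

end RLA

theorem stmt8_general {V : Type*} [Fintype V] [DecidableEq V]
    (k : ℕ) (hk : 2 ≤ k)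
    (f : (V → ℕ) → ℝ)
    (hsub : KSubmodular k f)
    (hnn : ∀ x : V → ℕ, IsKSet k x → 0 ≤ f x)
    (hf0 : f (fun _ => 0) = 0)
    (c : V → ℝ) (hc : ∀ e, 0 < c e) (B : ℝ) (hB : 0 < B)
    (o : V → ℕ) (ho : IsKSet k o) (hoB : cost c o ≤ B)
    (ε : ℝ) (hε0 : 0 < ε)
    (v : ℝ) (hv1 : f o / (1 + ε) ≤ v) (hv2 : v ≤ f o)
    (τ : ℝ) (hτdef : τ = 2 * v / (5 * B)) (hτ : 0 ≤ τ)
    (n : ℕ) (e : ℕ → V)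
    (hinj : ∀ j₁ j₂, j₁ < n → j₂ < n → e j₁ = e j₂ → j₁ = j₂)
    (hsurj : ∀ v : V, ∃ j, j < n ∧ e j = v)
    (s : ℕ → (V → ℕ)) (pos : ℕ → ℕ)
    (hs0 : s 0 = fun _ => 0)
    (hposk : ∀ j < n, 1 ≤ pos j ∧ pos j ≤ k)
    (hbest : ∀ j < n, ∀ l, 1 ≤ l → l ≤ k →
      marg f (e j) l (s j) ≤ marg f (e j) (pos j) (s j))
    (hstep : ∀ j < n,
      ((cost c (s j) + c (e j) ≤ B ∧ c (e j) * τ ≤ marg f (e j) (pos j) (s j)) →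
        s (j + 1) = sqcup (s j) (singl (e j) (pos j))) ∧
      (¬ (cost c (s j) + c (e j) ≤ B ∧ c (e j) * τ ≤ marg f (e j) (pos j) (s j)) →
        s (j + 1) = s j))
    (em : V) (im : ℕ)
    (hem : ∀ (e' : V) (i : ℕ), 1 ≤ i → i ≤ k → f (singl e' i) ≤ f (singl em im)) :
    (1 / 5 - ε) * f o ≤ max (f (s n)) (f (singl em im)) := by
  have h : IsRLARun k f c B τ n e s pos := ⟨fun a ha b hb => hinj a b ha hb, hsurj, hs0, hposk,
    hbest, fun j hj => (hstep j hj).1, fun j hj => (hstep j hj).2⟩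
  have hfo := h.le_three_mul_add_sum hk hsub hf0 ho
  have hτB : τ * B = 2 * v / 5 := by rw [hτdef]; field_simp
  have hfov : f o ≤ (1 + ε) * v := (div_le_iff₀' (by linarith)).mp hv1
  have hεfo : 0 ≤ ε * f o := mul_nonneg hε0.le (hnn o ho)
  have hεv : ε * v ≤ ε * f o := mul_le_mul_of_nonneg_left hv2 hε0.le
  have hFmax := le_max_left (f (s n)) (f (singl em im))
  have hMmax := le_max_right (f (s n)) (f (singl em im))
  rcases h.sum_marg_rejectedSteps_le hsub hf0 (fun a => (hc a).le) hτ ho hoB hem with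
    hsum | hF | hsum <;> linarith

/-- approximation guarantee of `RLA`: with `o` optimal,
`opt/(1+ε) ≤ v ≤ opt`, threshold `τ = 2v/(5B)` and `(e_m, i_m)` a best
singleton, `max {f(s), f((e_m,i_m))} ≥ (1/5 − ε)·opt`. -/
theorem stmt8 {V : Type*} [Fintype V] [DecidableEq V] [Nonempty V]
    (k : ℕ) (hk : 2 ≤ k)
    (f : (V → ℕ) → ℝ)
    (hsub : KSubmodular k f)
    (hnn : ∀ x : V → ℕ, IsKSet k x → 0 ≤ f x)
    (hf0 : f (fun _ => 0) = 0)
    (c : V → ℝ) (hc : ∀ e, 0 < c e) (B : ℝ) (hB : 0 < B)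
    (o : V → ℕ) (ho : IsKSet k o) (hoB : cost c o ≤ B)
    (hopt : ∀ y : V → ℕ, IsKSet k y → cost c y ≤ B → f y ≤ f o)
    (ε : ℝ) (hε0 : 0 < ε) (hε1 : ε < 1 / 5)
    (v : ℝ) (hv1 : f o / (1 + ε) ≤ v) (hv2 : v ≤ f o)
    (τ : ℝ) (hτdef : τ = 2 * v / (5 * B)) (hτ : 0 ≤ τ)
    (n : ℕ) (e : ℕ → V)
    (hinj : ∀ j₁ j₂, j₁ < n → j₂ < n → e j₁ = e j₂ → j₁ = j₂)
    (hsurj : ∀ v : V, ∃ j, j < n ∧ e j = v)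
    (s : ℕ → (V → ℕ)) (pos : ℕ → ℕ)
    (hs0 : s 0 = fun _ => 0)
    (hposk : ∀ j < n, 1 ≤ pos j ∧ pos j ≤ k)
    (hbest : ∀ j < n, ∀ l, 1 ≤ l → l ≤ k →
      marg f (e j) l (s j) ≤ marg f (e j) (pos j) (s j))
    (hstep : ∀ j < n,
      ((cost c (s j) + c (e j) ≤ B ∧ c (e j) * τ ≤ marg f (e j) (pos j) (s j)) →
        s (j + 1) = sqcup (s j) (singl (e j) (pos j))) ∧
      (¬ (cost c (s j) + c (e j) ≤ B ∧ c (e j) * τ ≤ marg f (e j) (pos j) (s j)) →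
        s (j + 1) = s j))
    (em : V) (im : ℕ) (him1 : 1 ≤ im) (him2 : im ≤ k)
    (hem : ∀ (e' : V) (i : ℕ), 1 ≤ i → i ≤ k → f (singl e' i) ≤ f (singl em im)) :
    (1 / 5 - ε) * f o ≤ max (f (s n)) (f (singl em im)) :=
  stmt8_general k hk f hsub hnn hf0 c hc B hB o ho hoB ε hε0 v hv1 hv2 τ hτdef hτ n e hinj hsurj s
    pos hs0 hposk hbest hstep em im hem
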